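/- arXiv:2104.05037 — 2 statements merged into one kernel-verified Lean document; each statement's English description precedes it below -/
import Mathlib

section
/- Let n ≥ 1, K > 0, and define μ(a, f) = K·a·(a² - f²)^((n-1)/2) for a ≥ f ≥ 0 (real power). Let a_IS, f_IS, a_s, f_s, a_t, f_t ≥ 0 satisfy a_s ≥ f_s, a_t ≥ f_t, a_s + a_t = a_IS, and f_s + f_t ≥ f_IS with a_IS ≥ f_IS. Then μ(a_s, f_s) + μ(a_t, f_t) ≤ μ(a_IS, f_IS). -/
/-!
Since `f_IS ≤ f_s + f_t`, the squared minor axis of the informed set dominates that of each part: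
`a_IS² - f_IS² ≥ (a_s + a_t)² - (f_s + f_t)² ≥ a_s² - f_s²`, the last step because
`a_t² - f_t² ≥ 0` and `a_s a_t ≥ f_s f_t`. Hence each `μ(a, f) = K a (a² - f²)^p` is at most
`K a (a_IS² - f_IS²)^p`, and these bounds add up to `μ(a_IS, f_IS)` because `a_s + a_t = a_IS`.
-/

lemma sq_sub_sq_le_add_sq_sub_sq {a f a' f' F : ℝ} (hf : 0 ≤ f) (hfa : f ≤ a) (hf' : 0 ≤ f')
    (hfa' : f' ≤ a') (hF : 0 ≤ F) (hFf : F ≤ f + f') :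
    a ^ 2 - f ^ 2 ≤ (a + a') ^ 2 - F ^ 2 := by
  have hF2 : F ^ 2 ≤ (f + f') ^ 2 := pow_le_pow_left₀ hF hFf 2
  nlinarith [mul_le_mul hfa hfa' hf' (hf.trans hfa)]

lemma mul_rpow_sq_sub_sq_add_le {K p a f a' f' F : ℝ} (hK : 0 ≤ K) (hp : 0 ≤ p)
    (hf : 0 ≤ f) (hfa : f ≤ a) (hf' : 0 ≤ f') (hfa' : f' ≤ a') (hF : 0 ≤ F)
    (hFf : F ≤ f + f') :
    K * a * (a ^ 2 - f ^ 2) ^ p + K * a' * (a' ^ 2 - f' ^ 2) ^ p ≤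
      K * (a + a') * ((a + a') ^ 2 - F ^ 2) ^ p := by
  have hle : a ^ 2 - f ^ 2 ≤ (a + a') ^ 2 - F ^ 2 :=
    sq_sub_sq_le_add_sq_sub_sq hf hfa hf' hfa' hF hFf
  have hle' : a' ^ 2 - f' ^ 2 ≤ (a + a') ^ 2 - F ^ 2 := by
    rw [add_comm a]
    exact sq_sub_sq_le_add_sq_sub_sq hf' hfa' hf hfa hF (by linarith)
  have ha : 0 ≤ a := hf.trans hfa
  have ha' : 0 ≤ a' := hf'.trans hfa'
  have hsq : 0 ≤ a ^ 2 - f ^ 2 := sub_nonneg.2 (pow_le_pow_left₀ hf hfa 2)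
  have hsq' : 0 ≤ a' ^ 2 - f' ^ 2 := sub_nonneg.2 (pow_le_pow_left₀ hf' hfa' 2)
  calc K * a * (a ^ 2 - f ^ 2) ^ p + K * a' * (a' ^ 2 - f' ^ 2) ^ p
      ≤ K * a * ((a + a') ^ 2 - F ^ 2) ^ p + K * a' * ((a + a') ^ 2 - F ^ 2) ^ p := by
        gcongr
    _ = K * (a + a') * ((a + a') ^ 2 - F ^ 2) ^ p := by ring

theorem measure_sum_le_general (n : ℕ) (hn : 1 ≤ n) (K : ℝ) (hK : 0 < K)
    (aIS fIS as fs at_ ft : ℝ)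
    (hfIS : 0 ≤ fIS) (hfs : 0 ≤ fs)
    (hft : 0 ≤ ft)
    (h1 : fs ≤ as) (h2 : ft ≤ at_) (h3 : as + at_ = aIS)
    (h4 : fIS ≤ fs + ft) :
    K * as * ((as ^ 2 - fs ^ 2) ^ (((n : ℝ) - 1) / 2)) +
      K * at_ * ((at_ ^ 2 - ft ^ 2) ^ (((n : ℝ) - 1) / 2)) ≤
      K * aIS * ((aIS ^ 2 - fIS ^ 2) ^ (((n : ℝ) - 1) / 2)) := by
  have hp : 0 ≤ ((n : ℝ) - 1) / 2 := div_nonneg (sub_nonneg.2 (by exact_mod_cast hn)) zero_le_two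
  subst h3
  exact mul_rpow_sq_sub_sq_add_le hK.le hp hfs h1 hft h2 hfIS h4

theorem measure_sum_le (n : ℕ) (hn : 1 ≤ n) (K : ℝ) (hK : 0 < K)
    (aIS fIS as fs at_ ft : ℝ)
    (haIS : 0 ≤ aIS) (hfIS : 0 ≤ fIS) (has : 0 ≤ as) (hfs : 0 ≤ fs)
    (hat : 0 ≤ at_) (hft : 0 ≤ ft)
    (h1 : fs ≤ as) (h2 : ft ≤ at_) (h3 : as + at_ = aIS)
    (h4 : fIS ≤ fs + ft) (h5 : fIS ≤ aIS) :
    K * as * ((as ^ 2 - fs ^ 2) ^ (((n : ℝ) - 1) / 2)) +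
      K * at_ * ((at_ ^ 2 - ft ^ 2) ^ (((n : ℝ) - 1) / 2)) ≤
      K * aIS * ((aIS ^ 2 - fIS ^ 2) ^ (((n : ℝ) - 1) / 2)) :=
  measure_sum_le_general n hn K hK aIS fIS as fs at_ ft hfIS hfs hft h1 h2 h3 h4
end

section
/- Let x_s, x_t, b ∈ ℝⁿ (n ≥ 1), c > ‖x_s - x_t‖, and g with ‖x_s - b‖ < g and g + ‖b - x_t‖ < c. Then λ(E(x_s, b, g)) + λ(E(b, x_t, c − g)) ≤ λ(E(x_s, x_t, c)), where λ denotes Lebesgue measure on ℝⁿ and E(p, q, a) = {x | ‖p − x‖ + ‖x − q‖ ≤ a}, given that the Lebesgue measure of E(p, q, a) equals K·a·(a² − ‖p − q‖²)^((n−1)/2) with K = π^(n/2)/(2ⁿ Γ(n/2 + 1)). -/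
/-!
Writing `m = (n - 1) / 2`, the measure of `E(p, q, a)` is `K a (a² - f²)^m` with `m ≥ 0`.
Since `b` splits the budget `c` into `g + (c - g)`, the triangle inequality gives
`g² - ‖x_s - b‖² ≤ c² - ‖x_s - x_t‖²` and `(c - g)² - ‖b - x_t‖² ≤ c² - ‖x_s - x_t‖²`,
so the two local measures are at most `K g (c² - f²)^m` and `K (c - g) (c² - f²)^m`,
which add up to the measure of the informed set.
-/

open MeasureTheory Real

def PHS {n : ℕ} (p q : EuclideanSpace ℝ (Fin n)) (a : ℝ) : Set (EuclideanSpace ℝ (Fin n)) :=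
  {x | dist p x + dist x q ≤ a}

noncomputable def phsConst (n : ℕ) : ℝ :=
  π ^ ((n : ℝ) / 2) / (2 ^ n * Real.Gamma ((n : ℝ) / 2 + 1))

noncomputable def phsVolume (n : ℕ) (f a : ℝ) : ℝ :=
  phsConst n * a * ((a ^ 2 - f ^ 2) ^ (((n : ℝ) - 1) / 2))

lemma phsConst_nonneg (n : ℕ) : 0 ≤ phsConst n :=
  div_nonneg (rpow_nonneg pi_pos.le _)
    (mul_nonneg (by positivity) (Real.Gamma_pos_of_pos (by positivity)).le)

lemma phsVolume_nonneg (n : ℕ) {f a : ℝ} (hf : 0 ≤ f) (hfa : f ≤ a) : 0 ≤ phsVolume n f a :=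
  mul_nonneg (mul_nonneg (phsConst_nonneg n) (hf.trans hfa))
    (rpow_nonneg (sub_nonneg.2 (pow_le_pow_left₀ hf hfa 2)) _)

lemma sq_sub_dist_sq_le_of_add_dist_lt {X : Type*} [PseudoMetricSpace X] {x y z : X} {g c : ℝ}
    (hg : dist x y < g) (hc : g + dist y z < c) :
    g ^ 2 - dist x y ^ 2 ≤ c ^ 2 - dist x z ^ 2 := by
  have hxz : dist x z ≤ dist x y + dist y z := dist_triangle x y z
  have hxy : 0 ≤ dist x y := dist_nonneg
  have hyz : 0 ≤ dist y z := dist_nonneg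
  have hxz0 : 0 ≤ dist x z := dist_nonneg
  -- `c² - g² = (c - g)(c + g) ≥ dist y z · (2 dist x y + dist y z)`
  nlinarith [mul_le_mul hxz hxz hxz0 (add_nonneg hxy hyz)]

lemma mul_rpow_add_mul_rpow_le {m g c A B C : ℝ} (hm : 0 ≤ m) (hg : 0 ≤ g) (hgc : g ≤ c)
    (hA : 0 ≤ A) (hB : 0 ≤ B) (hAC : A ≤ C) (hBC : B ≤ C) :
    g * A ^ m + (c - g) * B ^ m ≤ c * C ^ m :=
  calc g * A ^ m + (c - g) * B ^ m ≤ g * C ^ m + (c - g) * C ^ m := by gcongr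
    _ = c * C ^ m := by ring

lemma phsVolume_add_le {X : Type*} [PseudoMetricSpace X] {n : ℕ} (hn : 1 ≤ n) {x y z : X}
    {g c : ℝ} (hg : dist x y < g) (hc : g + dist y z < c) :
    phsVolume n (dist x y) g + phsVolume n (dist y z) (c - g) ≤ phsVolume n (dist x z) c := by
  have hm : 0 ≤ ((n : ℝ) - 1) / 2 := by
    have : (1 : ℝ) ≤ n := by exact_mod_cast hn
    linarith
  have hyz : 0 ≤ dist y z := dist_nonneg
  have hA := sq_sub_dist_sq_le_of_add_dist_lt hg hc
  have hB : (c - g) ^ 2 - dist y z ^ 2 ≤ c ^ 2 - dist x z ^ 2 := by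
    simpa only [dist_comm] using
      sq_sub_dist_sq_le_of_add_dist_lt (x := z) (y := y) (z := x) (c := c)
        (by rw [dist_comm]; linarith) (by rw [dist_comm]; linarith)
  have hA0 : 0 ≤ g ^ 2 - dist x y ^ 2 := sub_nonneg.2 (pow_le_pow_left₀ dist_nonneg hg.le 2)
  have hB0 : 0 ≤ (c - g) ^ 2 - dist y z ^ 2 :=
    sub_nonneg.2 (pow_le_pow_left₀ hyz (by linarith) 2)
  have key := mul_rpow_add_mul_rpow_le (c := c) hm (dist_nonneg.trans hg.le) (by linarith)
    hA0 hB0 hA hB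
  have := mul_le_mul_of_nonneg_left key (phsConst_nonneg n)
  unfold phsVolume
  linarith

theorem local_subsets_measure_le_informed_general {n : ℕ} (hn : 1 ≤ n)
    (xs xt b : EuclideanSpace ℝ (Fin n)) (c g : ℝ)
    (hg : dist xs b < g) (hf : g + dist b xt < c)
    (hvol : ∀ (p q : EuclideanSpace ℝ (Fin n)) (a : ℝ), dist p q ≤ a →
      volume (PHS p q a) =
        ENNReal.ofReal ((π ^ ((n : ℝ) / 2) / (2 ^ n * Real.Gamma ((n : ℝ) / 2 + 1))) *
          a * ((a ^ 2 - dist p q ^ 2) ^ (((n : ℝ) - 1) / 2)))) :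
    volume (PHS xs b g) + volume (PHS b xt (c - g)) ≤ volume (PHS xs xt c) := by
  have hvol' : ∀ p q a, dist p q ≤ a →
      volume (PHS p q a) = ENNReal.ofReal (phsVolume n (dist p q) a) := hvol
  have hbt : dist b xt ≤ c - g := by linarith
  have hxt : dist xs xt ≤ c := (dist_triangle xs b xt).trans (by linarith)
  rw [hvol' xs b g hg.le, hvol' b xt (c - g) hbt, hvol' xs xt c hxt,
    ← ENNReal.ofReal_add (phsVolume_nonneg n dist_nonneg hg.le)
      (phsVolume_nonneg n dist_nonneg hbt)]
  exact ENNReal.ofReal_le_ofReal (phsVolume_add_le hn hg hf)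

theorem local_subsets_measure_le_informed {n : ℕ} (hn : 1 ≤ n)
    (xs xt b : EuclideanSpace ℝ (Fin n)) (c g : ℝ)
    (hc : dist xs xt < c) (hg : dist xs b < g) (hf : g + dist b xt < c)
    (hvol : ∀ (p q : EuclideanSpace ℝ (Fin n)) (a : ℝ), dist p q ≤ a →
      volume (PHS p q a) =
        ENNReal.ofReal ((π ^ ((n : ℝ) / 2) / (2 ^ n * Real.Gamma ((n : ℝ) / 2 + 1))) *
          a * ((a ^ 2 - dist p q ^ 2) ^ (((n : ℝ) - 1) / 2)))) :
    volume (PHS xs b g) + volume (PHS b xt (c - g)) ≤ volume (PHS xs xt c) :=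
  local_subsets_measure_le_informed_general hn xs xt b c g hg hf hvol
end
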